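/- Let O be a t×t binary orthogonal matrix (O^T O = I over F_2), S a subset of {1,...,t}, and k = dim(ker O_{S,S}). Let r(O) = Σ_{x∈F_2^t} |Ox⟩⟨x| acting on C^{2^t}, and let r(O)^{Γ_S} denote its partial transpose on the tensor factors indexed by S. Then X := (r(O)^{Γ_S})^† r(O)^{Γ_S} satisfies X^2 = 2^{2k} X and tr(X) = 2^t; hence r(O)^{Γ_S} has exactly 2^{t-2k} nonzero singular values, each equal to 2^k, and trace norm ‖r(O)^{Γ_S}‖_1 = 2^{t-k}. -/

import Mathlib

open scoped Classical
open Matrix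

/-- The operator `r(O) = ∑_{x ∈ F_2^t} |Ox⟩⟨x|` on `ℂ^{2^t} = (ℂ²)^{⊗t}`,
with standard basis indexed by bitstrings. -/
noncomputable def rOmat (t : ℕ) (O : Matrix (Fin t) (Fin t) (ZMod 2)) :
    Matrix (Fin t → ZMod 2) (Fin t → ZMod 2) ℂ :=
  fun u v => if u = O.mulVec v then 1 else 0

/-- Partial transpose on the tensor factors indexed by `S`:
`|x_S⟩⟨y_S| ⊗ |x_S̄⟩⟨y_S̄| ↦ |y_S⟩⟨x_S| ⊗ |x_S̄⟩⟨y_S̄|`. -/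
def ptrans (t : ℕ) (S : Finset (Fin t))
    (M : Matrix (Fin t → ZMod 2) (Fin t → ZMod 2) ℂ) :
    Matrix (Fin t → ZMod 2) (Fin t → ZMod 2) ℂ :=
  fun u v => M (fun i => if i ∈ S then v i else u i) (fun i => if i ∈ S then u i else v i)

/-- `X = (r(O)^{Γ_S})† r(O)^{Γ_S}`. -/
noncomputable def Xop (t : ℕ) (O : Matrix (Fin t) (Fin t) (ZMod 2))
    (S : Finset (Fin t)) : Matrix (Fin t → ZMod 2) (Fin t → ZMod 2) ℂ :=
  (ptrans t S (rOmat t O))ᴴ * ptrans t S (rOmat t O)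

section aux
open Finset
variable (t : ℕ) (O : Matrix (Fin t) (Fin t) (ZMod 2)) (S : Finset (Fin t))

def mskM : Matrix (Fin t) (Fin t) (ZMod 2) := Matrix.diagonal (fun i => if i ∈ S then 1 else 0)
def mskC : Matrix (Fin t) (Fin t) (ZMod 2) := Matrix.diagonal (fun i => if i ∈ S then 0 else 1)
def GMm : Matrix (Fin t) (Fin t) (ZMod 2) := mskC t S + O * mskM t S
def HMm : Matrix (Fin t) (Fin t) (ZMod 2) := mskM t S + O * mskC t S

lemma mskM_mulVec (v : Fin t → ZMod 2) :
    (mskM t S).mulVec v = fun i => if i ∈ S then v i else 0 := by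
  funext i; simp [mskM, mulVec_diagonal, ite_mul]

lemma mskC_mulVec (v : Fin t → ZMod 2) :
    (mskC t S).mulVec v = fun i => if i ∈ S then 0 else v i := by
  funext i; simp [mskC, mulVec_diagonal, ite_mul]

lemma addself (x : Fin t → ZMod 2) : x + x = 0 := by
  funext i; simpa using (by decide : ∀ a : ZMod 2, a + a = 0) (x i)

lemma cond_iff (u v : Fin t → ZMod 2) :
    ((fun i => if i ∈ S then v i else u i)
      = O.mulVec (fun i => if i ∈ S then u i else v i))
    ↔ (GMm t O S).mulVec u = (HMm t O S).mulVec v := by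
  have ha : (fun i => if i ∈ S then v i else u i)
      = (mskM t S).mulVec v + (mskC t S).mulVec u := by
    funext i; simp [mskM_mulVec, mskC_mulVec]; split <;> simp
  have hb : (fun i => if i ∈ S then u i else v i)
      = (mskM t S).mulVec u + (mskC t S).mulVec v := by
    funext i; simp [mskM_mulVec, mskC_mulVec]; split <;> simp
  rw [ha, hb, GMm, HMm, add_mulVec, add_mulVec, ← mulVec_mulVec, ← mulVec_mulVec,
    Matrix.mulVec_add]
  set p := (mskM t S).mulVec v
  set q := (mskC t S).mulVec u
  set r := O.mulVec ((mskM t S).mulVec u)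
  set s := O.mulVec ((mskC t S).mulVec v)
  constructor <;> intro h
  · linear_combination h + addself t r - addself t p
  · linear_combination h + addself t p - addself t r

lemma ptrans_entry (u v : Fin t → ZMod 2) :
    ptrans t S (rOmat t O) u v
      = if (GMm t O S).mulVec u = (HMm t O S).mulVec v then 1 else 0 := by
  unfold ptrans rOmat
  exact if_congr (cond_iff t O S u v) rfl rfl

/-- the number of `v` with `GMm *ᵥ v = y` -/
noncomputable def Ncnt (y : Fin t → ZMod 2) : ℕ :=
  (univ.filter fun v => (GMm t O S).mulVec v = y).card

lemma Xop_entry (u w : Fin t → ZMod 2) :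
    Xop t O S u w
      = if (HMm t O S).mulVec u = (HMm t O S).mulVec w
          then (Ncnt t O S ((HMm t O S).mulVec u) : ℂ) else 0 := by
  unfold Xop
  rw [Matrix.mul_apply]
  have h1 : ∀ v, (ptrans t S (rOmat t O))ᴴ u v * ptrans t S (rOmat t O) v w
      = if ((GMm t O S).mulVec v = (HMm t O S).mulVec u
            ∧ (GMm t O S).mulVec v = (HMm t O S).mulVec w) then 1 else 0 := by
    intro v
    rw [conjTranspose_apply, ptrans_entry, ptrans_entry]
    by_cases hc1 : (GMm t O S).mulVec v = (HMm t O S).mulVec u <;>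
      by_cases hc2 : (GMm t O S).mulVec v = (HMm t O S).mulVec w <;>
      simp [hc1, hc2]
  rw [Finset.sum_congr rfl (fun v _ => h1 v), Finset.sum_boole]
  split_ifs with h
  · norm_cast
    unfold Ncnt
    congr 1
    apply Finset.filter_congr
    intro v _
    simp only [← h, and_self]
  · have hempty : (Finset.univ.filter fun v =>
        (GMm t O S).mulVec v = (HMm t O S).mulVec u
          ∧ (GMm t O S).mulVec v = (HMm t O S).mulVec w) = ∅ := by
      apply Finset.filter_eq_empty_iff.mpr
      intro v _
      rintro ⟨h1c, h2c⟩
      exact h (h1c.symm.trans h2c)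
    rw [hempty]
    simp

lemma card_fiber (M : Matrix (Fin t) (Fin t) (ZMod 2)) (v0 : Fin t → ZMod 2) :
    (univ.filter fun v => M.mulVec v = M.mulVec v0).card
      = (univ.filter fun v => M.mulVec v = 0).card := by
  apply Finset.card_nbij' (fun v => v + v0) (fun v => v + v0)
  · intro a ha
    simp only [mem_coe, mem_filter, mem_univ, true_and] at ha ⊢
    rw [Matrix.mulVec_add, ha, addself]
  · intro a ha
    simp only [mem_coe, mem_filter, mem_univ, true_and] at ha ⊢
    rw [Matrix.mulVec_add, ha, zero_add]
  · intro a _; show a + v0 + v0 = a; rw [add_assoc, addself, add_zero]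
  · intro a _; show a + v0 + v0 = a; rw [add_assoc, addself, add_zero]

lemma card_ker_eq_pow (n : Type*) [Fintype n] [DecidableEq n]
    (M : Matrix n n (ZMod 2)) :
    (univ.filter fun v => M.mulVec v = 0).card
      = 2 ^ (Module.finrank (ZMod 2) (LinearMap.ker M.mulVecLin)) := by
  rw [← Fintype.card_subtype]
  have e : {v // M.mulVec v = 0} ≃ LinearMap.ker M.mulVecLin :=
    Equiv.subtypeEquivRight (by intro x; simp [LinearMap.mem_ker])
  rw [Fintype.card_congr e,
    Module.card_fintype (Module.finBasis (ZMod 2) (LinearMap.ker M.mulVecLin))]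
  simp

lemma finrank_ker_transpose (n : Type*) [Fintype n] [DecidableEq n]
    (M : Matrix n n (ZMod 2)) :
    Module.finrank (ZMod 2) (LinearMap.ker Mᵀ.mulVecLin)
      = Module.finrank (ZMod 2) (LinearMap.ker M.mulVecLin) := by
  have h1 := LinearMap.finrank_range_add_finrank_ker M.mulVecLin
  have h2 := LinearMap.finrank_range_add_finrank_ker Mᵀ.mulVecLin
  have h3 : Mᵀ.rank = M.rank := Matrix.rank_transpose M
  rw [Matrix.rank, Matrix.rank] at h3
  omega

lemma GMm_mulVec_apply (v : Fin t → ZMod 2) (i : Fin t) :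
    (GMm t O S).mulVec v i
      = (if i ∈ S then 0 else v i) + O.mulVec (fun j => if j ∈ S then v j else 0) i := by
  rw [GMm, add_mulVec, ← mulVec_mulVec, mskM_mulVec, mskC_mulVec]
  rfl

lemma mulVec_mask_eq (x : {i // i ∈ S} → ZMod 2) (i : Fin t) :
    O.mulVec (fun j => if h : j ∈ S then x ⟨j, h⟩ else 0) i
      = ∑ j : {j // j ∈ S}, O i j.val * x j := by
  rw [Matrix.mulVec, dotProduct]
  rw [show (Finset.univ : Finset (Fin t)) = S ∪ Sᶜ by simp]
  rw [Finset.sum_union (disjoint_compl_right)]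
  have h1 : ∑ j ∈ Sᶜ, O i j * (if h : j ∈ S then x ⟨j, h⟩ else 0) = 0 := by
    apply Finset.sum_eq_zero; intro j hj
    rw [dif_neg (Finset.mem_compl.mp hj), mul_zero]
  rw [h1, add_zero,
    ← Finset.sum_coe_sort S (fun j => O i j * (if h : j ∈ S then x ⟨j, h⟩ else 0))]
  apply Finset.sum_congr rfl
  intro j _
  rw [dif_pos j.2]

lemma submatrix_mulVec_apply (x : {i // i ∈ S} → ZMod 2) (p : {i // i ∈ S}) :
    (O.submatrix (Subtype.val : {i // i ∈ S} → Fin t) Subtype.val).mulVec x p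
      = ∑ j : {j // j ∈ S}, O p.val j.val * x j := rfl

lemma zmodtwo_eq_of_add_eq_zero (a b : ZMod 2) (h : a + b = 0) : b = a := by
  revert h; revert a b; decide

def swapE : ((Fin t → ZMod 2) × (Fin t → ZMod 2)) ≃ ((Fin t → ZMod 2) × (Fin t → ZMod 2)) where
  toFun := fun p => (fun i => if i ∈ S then p.1 i else p.2 i,
                     fun i => if i ∈ S then p.2 i else p.1 i)
  invFun := fun p => (fun i => if i ∈ S then p.1 i else p.2 i,
                      fun i => if i ∈ S then p.2 i else p.1 i)
  left_inv := by
    intro p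
    refine Prod.ext (funext fun i => ?_) (funext fun i => ?_) <;>
      · simp only; split <;> rfl
  right_inv := by
    intro p
    refine Prod.ext (funext fun i => ?_) (funext fun i => ?_) <;>
      · simp only; split <;> rfl

noncomputable def kerEquiv :
    {v : Fin t → ZMod 2 // (GMm t O S).mulVec v = 0}
      ≃ {x : {i // i ∈ S} → ZMod 2 //
          (O.submatrix (Subtype.val : {i // i ∈ S} → Fin t) Subtype.val).mulVec x = 0} where
  toFun := fun ⟨v, hv⟩ => ⟨fun j => v j.val, by
    funext p
    have h0 : (fun j => if h : j ∈ S then v j else (0 : ZMod 2))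
        = fun j => if j ∈ S then v j else 0 := by
      funext j; split <;> simp_all
    have := congrFun hv p.val
    rw [GMm_mulVec_apply, if_pos p.2, zero_add] at this
    rw [submatrix_mulVec_apply, ← mulVec_mask_eq, h0]
    exact this⟩
  invFun := fun ⟨x, hx⟩ =>
    ⟨fun i => if h : i ∈ S then x ⟨i, h⟩
        else O.mulVec (fun j => if h : j ∈ S then x ⟨j, h⟩ else 0) i, by
      set X0 : Fin t → ZMod 2 := fun j => if h : j ∈ S then x ⟨j, h⟩ else 0 with hX0
      set v : Fin t → ZMod 2 := fun i => if h : i ∈ S then x ⟨i, h⟩ else O.mulVec X0 i with hv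
      have hmask : (fun j => if j ∈ S then v j else 0) = X0 := by
        funext j; by_cases h : j ∈ S <;> simp [hv, hX0, h]
      funext i
      rw [GMm_mulVec_apply, hmask]
      by_cases h : i ∈ S
      · rw [if_pos h, zero_add, mulVec_mask_eq, ← submatrix_mulVec_apply t O S x ⟨i, h⟩, hx]
        rfl
      · rw [if_neg h, show v i = O.mulVec X0 i from by simp [hv, h]]
        simpa using (by decide : ∀ a : ZMod 2, a + a = 0) (O.mulVec X0 i)⟩
  left_inv := by
    rintro ⟨v, hv⟩
    apply Subtype.ext
    funext i
    by_cases h : i ∈ S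
    · simp [h]
    · simp only [dif_neg h]
      have h0 : (fun j => if h : j ∈ S then v j else (0 : ZMod 2))
          = fun j => if j ∈ S then v j else 0 := by
        funext j; split <;> simp_all
      rw [h0]
      have := congrFun hv i
      rw [GMm_mulVec_apply, if_neg h] at this
      have this2 : v i + (O *ᵥ fun j => if j ∈ S then v j else 0) i = 0 := by
        simpa using this
      exact zmodtwo_eq_of_add_eq_zero _ _ this2
  right_inv := by
    rintro ⟨x, hx⟩
    apply Subtype.ext
    funext p
    simp [p.2]

lemma Ncnt_zero :
    Ncnt t O S 0 = 2 ^ (Module.finrank (ZMod 2)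
      (LinearMap.ker ((O.submatrix (Subtype.val : {i // i ∈ S} → Fin t)
        (Subtype.val : {i // i ∈ S} → Fin t)).mulVecLin))) := by
  unfold Ncnt
  rw [show ((Finset.filter (fun v => (GMm t O S).mulVec v = 0) Finset.univ).card)
      = Fintype.card {v : Fin t → ZMod 2 // (GMm t O S).mulVec v = 0} from
    (Fintype.card_subtype _).symm]
  rw [Fintype.card_congr (kerEquiv t O S), Fintype.card_subtype, card_ker_eq_pow]

lemma HMm_rel (hO : Oᵀ * O = 1) : Oᵀ * HMm t O S = GMm t Oᵀ S := by
  rw [HMm, GMm, mul_add, ← mul_assoc, hO, one_mul, add_comm]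

lemma HMm_ker_iff (hO : Oᵀ * O = 1) (v : Fin t → ZMod 2) :
    (HMm t O S).mulVec v = 0 ↔ (GMm t Oᵀ S).mulVec v = 0 := by
  have hO' : O * Oᵀ = 1 := mul_eq_one_comm.mp hO
  constructor
  · intro h
    rw [← HMm_rel t O S hO, ← mulVec_mulVec, h, Matrix.mulVec_zero]
  · intro h
    have : (O * (Oᵀ * HMm t O S)).mulVec v = 0 := by
      rw [← mulVec_mulVec, HMm_rel t O S hO, h, Matrix.mulVec_zero]
    rwa [← mul_assoc, hO', one_mul] at this

lemma HMm_ker_card (hO : Oᵀ * O = 1) :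
    (univ.filter fun v => (HMm t O S).mulVec v = 0).card
      = 2 ^ (Module.finrank (ZMod 2)
        (LinearMap.ker ((O.submatrix (Subtype.val : {i // i ∈ S} → Fin t)
          (Subtype.val : {i // i ∈ S} → Fin t)).mulVecLin))) := by
  have h1 : (univ.filter fun v => (HMm t O S).mulVec v = 0)
      = (univ.filter fun v => (GMm t Oᵀ S).mulVec v = 0) := by
    apply Finset.filter_congr
    intro v _
    exact HMm_ker_iff t O S hO v
  rw [h1]
  have h2 := Ncnt_zero t Oᵀ S
  unfold Ncnt at h2
  rw [h2]
  congr 1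
  rw [show Oᵀ.submatrix (Subtype.val : {i // i ∈ S} → Fin t) Subtype.val
      = (O.submatrix (Subtype.val : {i // i ∈ S} → Fin t) Subtype.val)ᵀ from
    (Matrix.transpose_submatrix O _ _).symm]
  exact finrank_ker_transpose _ _

end aux

set_option maxHeartbeats 1000000 in
theorem stmt_17 (t : ℕ) (O : Matrix (Fin t) (Fin t) (ZMod 2)) (hO : Oᵀ * O = 1)
    (S : Finset (Fin t)) (k : ℕ)
    (hk : k = Module.finrank (ZMod 2)
      (LinearMap.ker ((O.submatrix (Subtype.val : {i // i ∈ S} → Fin t)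
        (Subtype.val : {i // i ∈ S} → Fin t)).mulVecLin))) :
    Xop t O S * Xop t O S = ((2 : ℂ) ^ (2 * k)) • Xop t O S ∧
    (Xop t O S).trace = 2 ^ t ∧
    ∀ hX : (Xop t O S).IsHermitian,
      (Finset.univ.filter (fun i => hX.eigenvalues i ≠ 0)).card = 2 ^ (t - 2 * k) ∧
      ∑ i, Real.sqrt (hX.eigenvalues i) = 2 ^ (t - k) := by
  classical
  -- dichotomy for Ncnt
  have hNcases : ∀ y, Ncnt t O S y = 0 ∨ Ncnt t O S y = 2 ^ k := by
    intro y
    by_cases hy : ∃ v0, (GMm t O S).mulVec v0 = y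
    · right
      obtain ⟨v0, rfl⟩ := hy
      have h0 := Ncnt_zero t O S
      unfold Ncnt at h0 ⊢
      rw [card_fiber, h0, hk]
    · left
      unfold Ncnt
      rw [Finset.card_eq_zero, Finset.filter_eq_empty_iff]
      intro v _ hc
      exact hy ⟨v, hc⟩
  have hHfib : ∀ u, (Finset.univ.filter fun m =>
      (HMm t O S).mulVec m = (HMm t O S).mulVec u).card = 2 ^ k := by
    intro u
    rw [card_fiber, HMm_ker_card t O S hO, hk]
  -- Part 1
  have part1 : Xop t O S * Xop t O S = ((2 : ℂ) ^ (2 * k)) • Xop t O S := by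
    ext u w
    rw [Matrix.mul_apply, Matrix.smul_apply, smul_eq_mul]
    have hsum : ∀ m, Xop t O S u m * Xop t O S m w
        = if (HMm t O S).mulVec m = (HMm t O S).mulVec u
            then (if (HMm t O S).mulVec u = (HMm t O S).mulVec w
              then ((Ncnt t O S ((HMm t O S).mulVec u) : ℂ)
                * (Ncnt t O S ((HMm t O S).mulVec u) : ℂ)) else 0) else 0 := by
      intro m
      rw [Xop_entry, Xop_entry]
      by_cases h1 : (HMm t O S).mulVec u = (HMm t O S).mulVec m
      · by_cases h2 : (HMm t O S).mulVec m = (HMm t O S).mulVec w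
        · rw [if_pos h1, if_pos h2, if_pos h1.symm, if_pos (h1.trans h2), ← h1]
        · rw [if_pos h1, if_neg h2, if_pos h1.symm,
            if_neg (fun hc => h2 (h1.symm.trans hc)), mul_zero]
      · rw [if_neg h1, zero_mul, if_neg (fun hc => h1 hc.symm)]
    rw [Finset.sum_congr rfl (fun m _ => hsum m), ← Finset.sum_filter, Finset.sum_const,
      nsmul_eq_mul, hHfib u, Xop_entry]
    split_ifs with h
    · rcases hNcases ((HMm t O S).mulVec u) with h0 | h0
      · rw [h0]; simp
      · rw [h0]
        push_cast
        rw [two_mul, pow_add]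
        ring
    · simp
  refine ⟨part1, ?_⟩
  -- Part 2 : trace
  have part2 : (Xop t O S).trace = 2 ^ t := by
    have hdiag : ∀ u, (Xop t O S).diag u = (Ncnt t O S ((HMm t O S).mulVec u) : ℂ) := by
      intro u
      rw [Matrix.diag_apply, Xop_entry, if_pos rfl]
    have hN : ∀ u, (Ncnt t O S ((HMm t O S).mulVec u) : ℂ)
        = ∑ v : Fin t → ZMod 2, (if (fun i => if i ∈ S then u i else v i)
            = O.mulVec (fun i => if i ∈ S then v i else u i) then (1 : ℂ) else 0) := by
      intro u
      unfold Ncnt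
      rw [← Finset.sum_boole]
      exact Finset.sum_congr rfl (fun v _ => (if_congr (cond_iff t O S v u) rfl rfl).symm)
    calc (Xop t O S).trace
        = ∑ u, (Ncnt t O S ((HMm t O S).mulVec u) : ℂ) := by
          rw [Matrix.trace]; exact Finset.sum_congr rfl fun u _ => hdiag u
      _ = ∑ u : Fin t → ZMod 2, ∑ v : Fin t → ZMod 2, (if (fun i => if i ∈ S then u i else v i)
            = O.mulVec (fun i => if i ∈ S then v i else u i) then (1 : ℂ) else 0) :=
          Finset.sum_congr rfl fun u _ => hN u
      _ = ∑ p ∈ (Finset.univ : Finset (Fin t → ZMod 2)) ×ˢ (Finset.univ : Finset (Fin t → ZMod 2)),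
            (if (fun i => if i ∈ S then p.1 i else p.2 i)
              = O.mulVec (fun i => if i ∈ S then p.2 i else p.1 i) then (1 : ℂ) else 0) := by
          rw [← Finset.sum_product']
      _ = ∑ p : (Fin t → ZMod 2) × (Fin t → ZMod 2),
            (if (fun i => if i ∈ S then p.1 i else p.2 i)
              = O.mulVec (fun i => if i ∈ S then p.2 i else p.1 i) then (1 : ℂ) else 0) := by
          rw [Finset.univ_product_univ]
      _ = ∑ p : (Fin t → ZMod 2) × (Fin t → ZMod 2),
            (fun q : (Fin t → ZMod 2) × (Fin t → ZMod 2) =>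
              if q.1 = O.mulVec q.2 then (1 : ℂ) else 0) (swapE t S p) :=
          Finset.sum_congr rfl fun p _ => rfl
      _ = ∑ q : (Fin t → ZMod 2) × (Fin t → ZMod 2),
            (if q.1 = O.mulVec q.2 then (1 : ℂ) else 0) :=
          Equiv.sum_comp (swapE t S) (fun q => if q.1 = O.mulVec q.2 then (1 : ℂ) else 0)
      _ = ∑ q ∈ (Finset.univ : Finset (Fin t → ZMod 2)) ×ˢ (Finset.univ : Finset (Fin t → ZMod 2)),
            (if q.1 = O.mulVec q.2 then (1 : ℂ) else 0) := by
          rw [Finset.univ_product_univ]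
      _ = ∑ b : Fin t → ZMod 2, ∑ a : Fin t → ZMod 2,
            (if a = O.mulVec b then (1 : ℂ) else 0) := by
          rw [Finset.sum_product_right]
      _ = ∑ _b : Fin t → ZMod 2, (1 : ℂ) := by
          apply Finset.sum_congr rfl
          intro b _
          simp
      _ = 2 ^ t := by
          rw [Finset.sum_const, nsmul_eq_mul, mul_one, Finset.card_univ]
          have hcard : Fintype.card (Fin t → ZMod 2) = 2 ^ t := by simp
          rw [hcard]
          push_cast
          ring
  refine ⟨part2, ?_⟩
  -- Part 3
  intro hX
  -- eigenvalue dichotomy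
  have heig : ∀ i, hX.eigenvalues i = 0 ∨ hX.eigenvalues i = 2 ^ (2 * k) := by
    intro i
    have hv := hX.mulVec_eigenvectorBasis i
    set v : (Fin t → ZMod 2) → ℂ :=
      (WithLp.equiv 2 ((Fin t → ZMod 2) → ℂ)) (hX.eigenvectorBasis i) with hvdef
    set μ : ℂ := ((hX.eigenvalues i : ℝ) : ℂ) with hmu
    have hv' : Xop t O S *ᵥ v = μ • v := by
      rw [show Xop t O S *ᵥ v = hX.eigenvalues i • v from hv]
      funext j
      simp [hmu, Complex.real_smul]
    obtain ⟨j, hj⟩ : ∃ j, v j ≠ 0 := by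
      by_contra hc
      push_neg at hc
      have hv0 : v = 0 := funext hc
      apply hX.eigenvectorBasis.orthonormal.ne_zero i
      have := congrArg (WithLp.equiv 2 ((Fin t → ZMod 2) → ℂ)).symm hv0
      simpa [hvdef] using this
    have h2 : (((2 : ℂ) ^ (2 * k)) • Xop t O S) *ᵥ v = (((2 : ℂ) ^ (2 * k)) * μ) • v := by
      rw [Matrix.smul_mulVec, hv', smul_smul]
    have h1 : (((2 : ℂ) ^ (2 * k)) * μ) • v = (μ * μ) • v := by
      have e1 : (Xop t O S * Xop t O S) *ᵥ v = (μ * μ) • v := by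
        rw [← mulVec_mulVec, hv', Matrix.mulVec_smul, hv', smul_smul]
      rw [part1, h2] at e1
      exact e1
    have h3 : ((2 : ℂ) ^ (2 * k)) * μ * v j = μ * μ * v j := by
      have h3' := congrFun h1 j
      simp only [Pi.smul_apply, smul_eq_mul] at h3'
      exact h3'
    have h4 : ((2 : ℂ) ^ (2 * k)) * μ = μ * μ := mul_right_cancel₀ hj h3
    have h5 : μ * (μ - (2 : ℂ) ^ (2 * k)) = 0 := by linear_combination -h4
    rcases mul_eq_zero.mp h5 with h6 | h6
    · left
      rw [hmu] at h6
      exact_mod_cast h6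
    · right
      have h7 : μ = (2 : ℂ) ^ (2 * k) := sub_eq_zero.mp h6
      rw [hmu] at h7
      have h8 : ((hX.eigenvalues i : ℝ) : ℂ) = (((2 : ℝ) ^ (2 * k) : ℝ) : ℂ) := by
        rw [h7]; push_cast; ring
      exact_mod_cast h8
  -- sum of eigenvalues equals 2^t
  have htr : ∑ i, (hX.eigenvalues i : ℝ) = 2 ^ t := by
    have hU : star (hX.eigenvectorUnitary : Matrix (Fin t → ZMod 2) (Fin t → ZMod 2) ℂ)
        * (hX.eigenvectorUnitary : Matrix (Fin t → ZMod 2) (Fin t → ZMod 2) ℂ) = 1 :=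
      Unitary.coe_star_mul_self _
    have h1 : (Xop t O S).trace = ∑ i, ((hX.eigenvalues i : ℝ) : ℂ) := by
      conv_lhs => rw [hX.spectral_theorem]
      rw [Unitary.conjStarAlgAut_apply, Matrix.trace_mul_cycle, hU, one_mul, Matrix.trace_diagonal]
      simp [Function.comp]
    rw [part2] at h1
    have h2 : ((∑ i, hX.eigenvalues i : ℝ) : ℂ) = ((2 ^ t : ℝ) : ℂ) := by
      push_cast
      rw [← h1]
    exact_mod_cast h2
  set c := (Finset.univ.filter (fun i => hX.eigenvalues i ≠ 0)).card with hc
  have hfilter : ∑ i ∈ Finset.univ.filter (fun i => hX.eigenvalues i ≠ 0), hX.eigenvalues i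
      = ∑ i, hX.eigenvalues i :=
    Finset.sum_filter_of_ne (fun x _ h => h)
  have hconst : ∑ i ∈ Finset.univ.filter (fun i => hX.eigenvalues i ≠ 0), hX.eigenvalues i
      = ∑ _i ∈ Finset.univ.filter (fun i => hX.eigenvalues i ≠ 0), (2 : ℝ) ^ (2 * k) := by
    apply Finset.sum_congr rfl
    intro i hi
    rcases heig i with h | h
    · exact absurd h (Finset.mem_filter.mp hi).2
    · exact h
  have hsum2 : (c : ℝ) * 2 ^ (2 * k) = 2 ^ t := by
    rw [← htr, ← hfilter, hconst, Finset.sum_const, nsmul_eq_mul, ← hc]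
  have hnat : c * 2 ^ (2 * k) = 2 ^ t := by exact_mod_cast hsum2
  have h2k : 2 * k ≤ t := by
    have hdvd : (2 : ℕ) ^ (2 * k) ∣ 2 ^ t := Dvd.intro c (by rw [mul_comm]; exact hnat)
    exact (Nat.pow_dvd_pow_iff_le_right one_lt_two).mp hdvd
  have hcval : c = 2 ^ (t - 2 * k) := by
    have hmul : c * 2 ^ (2 * k) = 2 ^ (t - 2 * k) * 2 ^ (2 * k) := by
      rw [hnat, ← pow_add, Nat.sub_add_cancel h2k]
    exact Nat.eq_of_mul_eq_mul_right (Nat.pow_pos two_pos) hmul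
  refine ⟨hcval, ?_⟩
  -- sum of square roots
  have hsqrt : ∀ i, hX.eigenvalues i ≠ 0 → Real.sqrt (hX.eigenvalues i) = 2 ^ k := by
    intro i hi
    rcases heig i with h | h
    · exact absurd h hi
    · rw [h, show ((2 : ℝ) ^ (2 * k)) = ((2 : ℝ) ^ k) ^ 2 by rw [← pow_mul, mul_comm],
        Real.sqrt_sq (by positivity)]
  have hfilter2 : ∑ i ∈ Finset.univ.filter (fun i => hX.eigenvalues i ≠ 0),
        Real.sqrt (hX.eigenvalues i)
      = ∑ i, Real.sqrt (hX.eigenvalues i) := by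
    apply Finset.sum_filter_of_ne
    intro x _ hne h0
    exact hne (by rw [h0, Real.sqrt_zero])
  rw [← hfilter2,
    Finset.sum_congr rfl (fun i hi => hsqrt i (Finset.mem_filter.mp hi).2),
    Finset.sum_const, nsmul_eq_mul, ← hc, hcval]
  push_cast
  rw [← pow_add]
  congr 1
  omega
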